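/- arXiv:2009.03505 — 4 statements merged into one kernel-verified Lean document; each statement's English description precedes it below -/
import Mathlib

section
/- Let P_N and P_A be probability distributions on a finite alphabet X with P_N absolutely continuous with respect to P_A, and for real M > 2 define GD_M(P_N,P_A) = D(P_A || ((M-2)P_N + P_A)/(M-1)) + (M-2)·D(P_N || ((M-2)P_N + P_A)/(M-1)). Then the partial derivative of GD_M(P_N,P_A) with respect to M equals D(P_N || ((M-2)P_N + P_A)/(M-1)). -/
open Finset Real

def IsProb {X : Type*} [Fintype X] (P : X → ℝ) : Prop :=
  (∀ x, 0 ≤ P x) ∧ ∑ x, P x = 1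

noncomputable def KL {X : Type*} [Fintype X] (P Q : X → ℝ) : ℝ :=
  ∑ x, P x * Real.log (P x / Q x)

/-!
Pointwise in `x`, write `Q_m = ((m - 2) a + b) / (m - 1)` with `a = P_N x`, `b = P_A x`.
Since `(m - 1) Q_m = (m - 2) a + b`, we have `∂Q_m/∂m = (a - Q_m) / (m - 1)`, and the summand
`b log (b / Q_m) + (m - 2) a log (a / Q_m)` of `GD_M` has derivative `a log (a / Q_m) + Q_m - a`.
Summing over `x`, the correction terms `Q_m - a` cancel because both `Q_m` and `P_N` sum to one.
-/

open Filter Topology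

noncomputable def mixture (a b m : ℝ) : ℝ := ((m - 2) * a + b) / (m - 1)

lemma mixture_pos {a b m : ℝ} (ha : 0 ≤ a) (hb : 0 < b) (hm : 2 ≤ m) : 0 < mixture a b m := by
  unfold mixture
  have : 0 ≤ (m - 2) * a := mul_nonneg (by linarith) ha
  exact div_pos (by linarith) (by linarith)

lemma hasDerivAt_mixture (a b : ℝ) {M : ℝ} (hM : M ≠ 1) :
    HasDerivAt (mixture a b) ((a - mixture a b M) / (M - 1)) M := by
  have hM1 : M - 1 ≠ 0 := sub_ne_zero.mpr hM
  refine (((((hasDerivAt_id' M).sub_const 2).mul_const a).add_const b).fun_div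
    ((hasDerivAt_id' M).sub_const 1) hM1).congr_deriv ?_
  unfold mixture
  field_simp

lemma sum_mixture {X : Type*} [Fintype X] {p q : X → ℝ} (hp : ∑ x, p x = 1)
    (hq : ∑ x, q x = 1) {m : ℝ} (hm : m ≠ 1) : ∑ x, mixture (p x) (q x) m = 1 := by
  have hm1 : m - 1 ≠ 0 := sub_ne_zero.mpr hm
  unfold mixture
  rw [← sum_div, sum_add_distrib, ← mul_sum, hp, hq, div_eq_one_iff_eq hm1]
  ring

lemma mul_log_div_eq_sub {a q : ℝ} (h : q = 0 → a = 0) :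
    a * log (a / q) = a * log a - a * log q := by
  rcases eq_or_ne a 0 with rfl | ha
  · simp
  · rw [log_div ha (mt h ha), mul_sub]

lemma hasDerivAt_gdSummand {a b M : ℝ} (ha : 0 ≤ a) (hb : 0 ≤ b) (hab : b = 0 → a = 0)
    (hM : 2 < M) :
    HasDerivAt (fun m => b * log (b / mixture a b m) + (m - 2) * (a * log (a / mixture a b m)))
      (a * log (a / mixture a b M) + mixture a b M - a) M := by
  rcases hb.eq_or_lt with rfl | hb_pos
  · obtain rfl := hab rfl
    simpa [mixture] using hasDerivAt_const M (0 : ℝ)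
  have hQ : ∀ᶠ m in 𝓝 M, 0 < mixture a b m := by
    filter_upwards [Ioi_mem_nhds hM] with m hm using mixture_pos ha hb_pos hm.le
  have hQM : 0 < mixture a b M := hQ.self_of_nhds
  have hM1 : M - 1 ≠ 0 := by linarith
  have hlogQ := (hasDerivAt_mixture a b (by linarith : M ≠ 1)).log hQM.ne'
  have hexpanded := ((hasDerivAt_const M (b * log b)).fun_sub (hlogQ.const_mul b)).fun_add
    (((hasDerivAt_id' M).sub_const 2).fun_mul ((hasDerivAt_const M (a * log a)).fun_sub
      (hlogQ.const_mul a)))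
  refine (hexpanded.congr_of_eventuallyEq (hQ.mono fun m hm => ?_)).congr_deriv ?_
  · simp only [mul_log_div_eq_sub fun h => absurd h hm.ne']
  · have hQdef : (M - 1) * mixture a b M = (M - 2) * a + b := by
      simp only [mixture]; field_simp
    rw [mul_log_div_eq_sub fun h => absurd h hQM.ne']
    field_simp
    linear_combination (a - mixture a b M) * hQdef

/-- ∂GD_M(P_N,P_A)/∂M = D(P_N ‖ ((M-2)P_N+P_A)/(M-1)) for real M > 2. -/
theorem stmt1 {X : Type*} [Fintype X] (PN PA : X → ℝ)
    (hN : IsProb PN) (hA : IsProb PA)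
    (hac : ∀ x, PA x = 0 → PN x = 0)
    (M : ℝ) (hM : 2 < M) :
    HasDerivAt (fun m : ℝ =>
        KL PA (fun x => ((m - 2) * PN x + PA x) / (m - 1))
          + (m - 2) * KL PN (fun x => ((m - 2) * PN x + PA x) / (m - 1)))
      (KL PN (fun x => ((M - 2) * PN x + PA x) / (M - 1))) M := by
  obtain ⟨hN0, hN1⟩ := hN
  obtain ⟨hA0, hA1⟩ := hA
  have hsum := HasDerivAt.fun_sum (u := univ) fun x _ =>
    hasDerivAt_gdSummand (hN0 x) (hA0 x) (hac x) hM
  rw [sum_sub_distrib, sum_add_distrib, sum_mixture hN1 hA1 (by linarith), hN1,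
    add_sub_cancel_right] at hsum
  simp only [KL, mul_sum, ← sum_add_distrib]
  exact hsum
end

section
/- Let P_N and P_A be distinct probability distributions on a finite alphabet X with full support. For integer M ≥ 2 define GD_M(P_N,P_A) = D(P_A || ((M-2)P_N + P_A)/(M-1)) + (M-2)·D(P_N || ((M-2)P_N + P_A)/(M-1)). Then GD_M(P_N,P_A) converges to D(P_A || P_N) as M tends to infinity. -/
/-!
Put `t = M - 1`, so that the mixture is `P_N + (P_A - P_N) / t`. Pointwise, the first summand
`P_A log (P_A / mixture)` tends to `P_A log (P_A / P_N)` by continuity, while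
`(t - 1) P_N log (P_N / mixture) = -P_N (t - 1) log (1 + c / t)` with `c = (P_A - P_N) / P_N`
tends to `-P_N c = P_N - P_A`, and these corrections sum to `1 - 1 = 0`.
-/

open Finset Real

open Filter Topology

theorem tendsto_sub_one_mul_log_one_add_div_atTop (c : ℝ) :
    Tendsto (fun t => (t - 1) * log (1 + c / t)) atTop (𝓝 c) := by
  have hlog : Tendsto (fun t => log (1 + c / t)) atTop (𝓝 0) := by
    have h : Tendsto (fun t => 1 + c / t) atTop (𝓝 1) := by
      simpa using tendsto_const_nhds.add (tendsto_const_nhds.div_atTop (tendsto_id (α := ℝ)))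
    simpa using h.log one_ne_zero
  simpa [sub_mul] using (tendsto_mul_log_one_add_div_atTop c).sub hlog

theorem continuousAt_mul_log_div (b : ℝ) {a : ℝ} (ha : a ≠ 0) :
    ContinuousAt (fun m => b * log (b / m)) a := by
  rcases eq_or_ne b 0 with rfl | hb
  · simpa using continuousAt_const
  · exact continuousAt_const.mul
      ((continuousAt_log (div_ne_zero hb ha)).comp (continuousAt_const.div continuousAt_id ha))

theorem tendsto_mul_log_div_mixture_atTop {a : ℝ} (ha : a ≠ 0) (b : ℝ) :
    Tendsto (fun t => b * log (b / (a + (b - a) / t))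
        + (t - 1) * (a * log (a / (a + (b - a) / t))))
      atTop (𝓝 (b * log (b / a) + a - b)) := by
  have hmix : Tendsto (fun t => a + (b - a) / t) atTop (𝓝 a) := by
    simpa using tendsto_const_nhds.add (tendsto_const_nhds.div_atTop (tendsto_id (α := ℝ)))
  have hfirst := (continuousAt_mul_log_div b ha).tendsto.comp hmix
  have hsecond := (tendsto_sub_one_mul_log_one_add_div_atTop ((b - a) / a)).const_mul (-a)
  have hlimit : b * log (b / a) + a - b = b * log (b / a) + -a * ((b - a) / a) := by
    rw [neg_mul, mul_div_cancel₀ _ ha]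
    ring
  rw [hlimit]
  refine (hfirst.add hsecond).congr fun t => ?_
  have hratio : a / (a + (b - a) / t) = (1 + (b - a) / a / t)⁻¹ := by
    field_simp
  simp only [Function.comp_apply, hratio, log_inv]
  ring

theorem KL_eq_sum_mul_log_add_sub {X : Type*} [Fintype X] {P Q : X → ℝ}
    (hP : IsProb P) (hQ : IsProb Q) :
    KL P Q = ∑ x, (P x * log (P x / Q x) + Q x - P x) := by
  rw [sum_sub_distrib, sum_add_distrib, hP.2, hQ.2, KL, add_sub_cancel_right]

theorem tendsto_natCast_sub_one_atTop :
    Tendsto (fun M : ℕ => (M : ℝ) - 1) atTop atTop :=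
  tendsto_atTop_add_const_right _ _ tendsto_natCast_atTop_atTop

theorem stmt2_general {X : Type*} [Fintype X] (PN PA : X → ℝ)
    (hN : IsProb PN) (hA : IsProb PA)
    (hNpos : ∀ x, 0 < PN x) :
    Filter.Tendsto (fun M : ℕ =>
        KL PA (fun x => (((M : ℝ) - 2) * PN x + PA x) / ((M : ℝ) - 1))
          + ((M : ℝ) - 2) *
              KL PN (fun x => (((M : ℝ) - 2) * PN x + PA x) / ((M : ℝ) - 1)))
      Filter.atTop (nhds (KL PA PN)) := by
  have hterm x := (tendsto_mul_log_div_mixture_atTop (hNpos x).ne' (PA x)).comp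
    tendsto_natCast_sub_one_atTop
  rw [KL_eq_sum_mul_log_add_sub hA hN]
  refine (tendsto_finsetSum univ fun x _ => hterm x).congr' ?_
  filter_upwards [eventually_ne_atTop 1] with M hM
  have hM : (M : ℝ) - 1 ≠ 0 := sub_ne_zero.mpr (by exact_mod_cast hM)
  have hmix x : PN x + (PA x - PN x) / ((M : ℝ) - 1)
      = (((M : ℝ) - 2) * PN x + PA x) / ((M : ℝ) - 1) := by
    field_simp
    ring
  simp only [Function.comp_apply, hmix, KL, mul_sum, ← sum_add_distrib]
  rw [sub_sub, one_add_one_eq_two]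

/-- GD_M(P_N,P_A) → D(P_A‖P_N) as the integer M → ∞. -/
theorem stmt2 {X : Type*} [Fintype X] (PN PA : X → ℝ)
    (hN : IsProb PN) (hA : IsProb PA) (hne : PN ≠ PA)
    (hNpos : ∀ x, 0 < PN x) (hApos : ∀ x, 0 < PA x) :
    Filter.Tendsto (fun M : ℕ =>
        KL PA (fun x => (((M : ℝ) - 2) * PN x + PA x) / ((M : ℝ) - 1))
          + ((M : ℝ) - 2) *
              KL PN (fun x => (((M : ℝ) - 2) * PN x + PA x) / ((M : ℝ) - 1)))
      Filter.atTop (nhds (KL PA PN)) :=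
  stmt2_general PN PA hN hA hNpos
end

section
/- Let X be a finite alphabet, P_N ≠ P_A probability distributions with full support on X, M ≥ 3, and let GD_M = D(P_A || P_mix) + (M-2)·D(P_N || P_mix) with P_mix = ((M-2)P_N + P_A)/(M-1). Define LD_i(λ) as the minimum over pairs (j,k), j ≠ k, and tuples Q with G_j(Q) ≤ λ, G_k(Q) ≤ λ of D(Q_i || P_A) + Σ_{l≠i} D(Q_l || P_N). Then LD_i(λ) = 0 whenever λ ≥ GD_M. -/
/-!
The objective of `LD` is a sum of KL divergences against the positive distributions `PA`, `PN`,
hence nonnegative by Gibbs' inequality, so it suffices to attain `0`. The tuple with `Q i = PA` and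
`Q l = PN` for `l ≠ i` does so, and for every `j ≠ i` the leave-one-out mixture of this tuple is
`((M - 2) PN + PA) / (M - 1)`, so `Gfun j Q` is exactly `GD_M ≤ lam`. Since `M ≥ 3`, two
distinct such `j` exist.
-/

open Finset Real

noncomputable def Gfun {X : Type*} [Fintype X] {M : ℕ} (j : Fin M) (Q : Fin M → X → ℝ) : ℝ :=
  ∑ t ∈ Finset.univ.filter (· ≠ j),
    KL (Q t) (fun x => (∑ l ∈ Finset.univ.filter (· ≠ j), Q l x) / ((M : ℝ) - 1))

noncomputable def LD {X : Type*} [Fintype X] (M : ℕ) (PN PA : X → ℝ) (i : Fin M)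
    (lam : ℝ) : ℝ :=
  sInf {v : ℝ | ∃ (j k : Fin M) (Q : Fin M → X → ℝ), j ≠ k ∧ (∀ l, IsProb (Q l)) ∧
      Gfun j Q ≤ lam ∧ Gfun k Q ≤ lam ∧
      v = KL (Q i) PA + ∑ l ∈ Finset.univ.filter (· ≠ i), KL (Q l) PN}

-- No positivity is needed: where `P x = 0` the summand is `0 * log (0 / 0) = 0`.
theorem KL_self {X : Type*} [Fintype X] (P : X → ℝ) : KL P P = 0 :=
  Finset.sum_eq_zero fun x _ => by
    rcases eq_or_ne (P x) 0 with h | h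
    · simp [h]
    · simp [div_self h]

theorem sub_le_mul_log_div {p q : ℝ} (hp : 0 ≤ p) (hq : 0 < q) : p - q ≤ p * log (p / q) := by
  rcases hp.eq_or_lt with rfl | hp
  · simpa using hq.le
  · have h := mul_le_mul_of_nonneg_left (one_sub_inv_le_log_of_pos (div_pos hp hq)) hp.le
    rwa [inv_div, mul_sub, mul_one, mul_div_cancel₀ _ hp.ne'] at h

theorem KL_nonneg {X : Type*} [Fintype X] {P Q : X → ℝ} (hP : ∀ x, 0 ≤ P x)
    (hQ : ∀ x, 0 < Q x) (hmass : ∑ x, Q x ≤ ∑ x, P x) : 0 ≤ KL P Q :=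
  calc 0 ≤ ∑ x, (P x - Q x) := by rw [Finset.sum_sub_distrib]; linarith
    _ ≤ KL P Q := Finset.sum_le_sum fun x _ => sub_le_mul_log_div (hP x) (hQ x)

theorem sum_update_const_of_mem {ι β : Type*} [DecidableEq ι] [AddCommMonoid β]
    {s : Finset ι} {i : ι} (hi : i ∈ s) (c a : β) :
    ∑ l ∈ s, Function.update (fun _ => c) i a l = a + (s.card - 1) • c := by
  rw [Finset.sum_update_of_mem hi, Finset.sum_const, ← Finset.erase_eq,
    Finset.card_erase_of_mem hi]

theorem card_filter_ne_fin {M : ℕ} (j : Fin M) :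
    (Finset.univ.filter (· ≠ j)).card = M - 1 := by
  rw [Finset.filter_ne', Finset.card_erase_of_mem (Finset.mem_univ j), Finset.card_fin]

theorem Gfun_update_const {X : Type*} [Fintype X] {M : ℕ} (PN PA : X → ℝ) {i j : Fin M}
    (hji : j ≠ i) :
    Gfun j (Function.update (fun _ => PN) i PA) =
      KL PA (fun x => (((M : ℝ) - 2) * PN x + PA x) / ((M : ℝ) - 1))
        + ((M : ℝ) - 2) * KL PN (fun x => (((M : ℝ) - 2) * PN x + PA x) / ((M : ℝ) - 1)) := by
  have hi : i ∈ Finset.univ.filter (· ≠ j) := by simpa using hji.symm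
  have hM : (((M - 1 - 1 : ℕ)) : ℝ) = (M : ℝ) - 2 := by
    have : 2 ≤ M := by have := i.isLt; have := j.isLt; omega
    push_cast [Nat.sub_sub, this]; ring
  set mix : X → ℝ := fun x => (((M : ℝ) - 2) * PN x + PA x) / ((M : ℝ) - 1)
  have hmix : (fun x => (∑ l ∈ Finset.univ.filter (· ≠ j),
      Function.update (fun _ => PN) i PA l x) / ((M : ℝ) - 1)) = mix := by
    funext x
    rw [← Finset.sum_apply, sum_update_const_of_mem hi, card_filter_ne_fin,
      Pi.add_apply, Pi.smul_apply, nsmul_eq_mul, hM, add_comm]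
  unfold Gfun
  rw [hmix, Finset.sum_congr rfl fun t _ =>
    Function.apply_update (fun _ (q : X → ℝ) => KL q mix) (fun _ => PN) i PA t,
    sum_update_const_of_mem hi, card_filter_ne_fin, nsmul_eq_mul, hM]

theorem stmt13_general {X : Type*} [Fintype X] (M : ℕ) (hM : 3 ≤ M)
    (PN PA : X → ℝ) (hN : IsProb PN) (hA : IsProb PA)
    (hNpos : ∀ x, 0 < PN x) (hApos : ∀ x, 0 < PA x)
    (i : Fin M) (lam : ℝ)
    (hlam : KL PA (fun x => (((M : ℝ) - 2) * PN x + PA x) / ((M : ℝ) - 1))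
        + ((M : ℝ) - 2) *
            KL PN (fun x => (((M : ℝ) - 2) * PN x + PA x) / ((M : ℝ) - 1)) ≤ lam) :
    LD M PN PA i lam = 0 := by
  obtain ⟨j, hj, k, hk, hjk⟩ := Finset.one_lt_card.mp <|
    show 1 < (Finset.univ.filter (· ≠ i)).card by rw [card_filter_ne_fin]; omega
  refine IsLeast.csInf_eq
    ⟨⟨j, k, Function.update (fun _ => PN) i PA, hjk, fun l => ?_, ?_, ?_, ?_⟩, ?_⟩
  · rcases eq_or_ne l i with rfl | hl
    · simpa using hA
    · simpa [hl] using hN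
  · exact (Gfun_update_const PN PA (Finset.mem_filter.mp hj).2).trans_le hlam
  · exact (Gfun_update_const PN PA (Finset.mem_filter.mp hk).2).trans_le hlam
  · rw [Function.update_self, KL_self, zero_add, Finset.sum_eq_zero fun l hl => by
      rw [Function.update_of_ne (Finset.mem_filter.mp hl).2, KL_self]]
  · rintro v ⟨-, -, Q, -, hQ, -, -, rfl⟩
    exact add_nonneg (KL_nonneg (hQ i).1 hApos (hA.2.trans (hQ i).2.symm).le)
      (Finset.sum_nonneg fun l _ => KL_nonneg (hQ l).1 hNpos (hN.2.trans (hQ l).2.symm).le)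

/-- LD_i(λ) = 0 whenever λ ≥ GD_M(P_N,P_A). -/
theorem stmt13 {X : Type*} [Fintype X] (M : ℕ) (hM : 3 ≤ M)
    (PN PA : X → ℝ) (hN : IsProb PN) (hA : IsProb PA) (hne : PN ≠ PA)
    (hNpos : ∀ x, 0 < PN x) (hApos : ∀ x, 0 < PA x)
    (i : Fin M) (lam : ℝ)
    (hlam : KL PA (fun x => (((M : ℝ) - 2) * PN x + PA x) / ((M : ℝ) - 1))
        + ((M : ℝ) - 2) *
            KL PN (fun x => (((M : ℝ) - 2) * PN x + PA x) / ((M : ℝ) - 1)) ≤ lam) :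
    LD M PN PA i lam = 0 :=
  stmt13_general M hM PN PA hN hA hNpos hApos i lam hlam
end

section
/- For the case of T outliers with identical anomalous distribution: let P_N ≠ P_A be full-support distributions on a finite alphabet X, M > 2T, and for t in [T] define f(M,T,t) = t·D(P_A || P_mix^t) + (M-T-t)·D(P_N || P_mix^t), where P_mix^t = (t·P_A + (M-T-t)·P_N)/(M-T). Then, viewing M and T as real parameters, the partial derivative of f(M,T,t) with respect to M equals D(P_N || P_mix^t), and the partial derivative with respect to T equals -D(P_N || P_mix^t); in particular f is strictly increasing in M and strictly decreasing in T. -/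
open Finset Real

/-- The mixture P_mix^t = (t·P_A + (M-T-t)·P_N)/(M-T), with real parameters. -/
noncomputable def pmix {X : Type*} [Fintype X] (PN PA : X → ℝ) (t m T : ℝ) : X → ℝ :=
  fun x => (t * PA x + (m - T - t) * PN x) / (m - T)

/-- f(M,T,t) = t·D(P_A‖P_mix^t) + (M-T-t)·D(P_N‖P_mix^t). -/
noncomputable def fMT {X : Type*} [Fintype X] (PN PA : X → ℝ) (t m T : ℝ) : ℝ :=
  t * KL PA (pmix PN PA t m T) + (m - T - t) * KL PN (pmix PN PA t m T)


/-!
Write `s = M - T`; `f` depends on `(M, T)` only through `s`, so both partial derivatives are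
`± d/ds`. For a single letter with `a = P_A x`, `b = P_N x` and `q = (t a + (s - t) b) / s`,
differentiating `t a log (a / q) + (s - t) b log (b / q)` gives `b log (b / q)` from the explicit
factor `s - t`, plus `-s q' = q - b` from the dependence through `q`. Summing over the letters,
`∑ q = ∑ b = 1`, so `df/ds = D(P_N ‖ P_mix)`, which is positive by Gibbs' inequality because
`P_mix ≠ P_N` once `t > 0` and `P_A ≠ P_N`.
-/

open InformationTheory

theorem hasDerivAt_mixture_term {a b t s : ℝ} (ha : a ≠ 0) (hb : b ≠ 0) (hs : s ≠ 0)
    (hu : t * a + (s - t) * b ≠ 0) :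
    HasDerivAt
      (fun s => t * a * log (a / ((t * a + (s - t) * b) / s))
        + (s - t) * b * log (b / ((t * a + (s - t) * b) / s)))
      (b * log (b / ((t * a + (s - t) * b) / s)) + (t * a + (s - t) * b) / s - b) s := by
  have hq : HasDerivAt (fun s => (t * a + (s - t) * b) / s)
      ((b * s - (t * a + (s - t) * b)) / s ^ 2) s := by
    simpa using ((((hasDerivAt_id s).sub_const t).mul_const b).const_add (t * a)).fun_div
      (hasDerivAt_id s) hs
  have hq0 : (t * a + (s - t) * b) / s ≠ 0 := div_ne_zero hu hs
  have hlogA := ((hasDerivAt_const s a).fun_div hq hq0).log (div_ne_zero ha hq0)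
  have hlogB := ((hasDerivAt_const s b).fun_div hq hq0).log (div_ne_zero hb hq0)
  have hlin : HasDerivAt (fun s : ℝ => (s - t) * b) b s := by
    simpa using ((hasDerivAt_id s).sub_const t).mul_const b
  refine ((hlogA.const_mul (t * a)).fun_add (hlin.fun_mul hlogB)).congr_deriv ?_
  field_simp
  ring

section

variable {X : Type*} [Fintype X]

theorem KL_eq_sum_mul_klFun {P Q : X → ℝ} (hQ : ∀ x, 0 < Q x)
    (hPs : ∑ x, P x = 1) (hQs : ∑ x, Q x = 1) :
    KL P Q = ∑ x, Q x * klFun (P x / Q x) := by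
  have hterm : ∀ x, Q x * klFun (P x / Q x) = P x * log (P x / Q x) + (Q x - P x) := by
    intro x
    rw [klFun_apply]
    field_simp [(hQ x).ne']
    ring
  simp only [hterm, sum_add_distrib, sum_sub_distrib, hPs, hQs, KL]
  ring

theorem KL_pos_of_ne {P Q : X → ℝ} (hP : ∀ x, 0 ≤ P x) (hQ : ∀ x, 0 < Q x)
    (hPs : ∑ x, P x = 1) (hQs : ∑ x, Q x = 1) (hne : P ≠ Q) : 0 < KL P Q := by
  obtain ⟨x₀, hx₀⟩ := Function.ne_iff.mp hne
  have hratio : ∀ x, 0 ≤ P x / Q x := fun x => div_nonneg (hP x) (hQ x).le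
  have hpos : 0 < klFun (P x₀ / Q x₀) := by
    refine (klFun_nonneg (hratio x₀)).lt_of_ne' fun h => hx₀ ?_
    rwa [klFun_eq_zero_iff (hratio x₀), div_eq_one_iff_eq (hQ x₀).ne'] at h
  rw [KL_eq_sum_mul_klFun hQ hPs hQs]
  exact sum_pos' (fun x _ => mul_nonneg (hQ x).le (klFun_nonneg (hratio x)))
    ⟨x₀, mem_univ _, mul_pos (hQ x₀) hpos⟩

theorem pmix_sub (PN PA : X → ℝ) (t m T : ℝ) :
    pmix PN PA t (m - T) 0 = pmix PN PA t m T := by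
  funext x
  simp [pmix]

theorem fMT_sub (PN PA : X → ℝ) (t m T : ℝ) : fMT PN PA t (m - T) 0 = fMT PN PA t m T := by
  simp [fMT, pmix_sub]

theorem fMT_zero_eq_sum (PN PA : X → ℝ) (t s : ℝ) :
    fMT PN PA t s 0 = ∑ x, (t * PA x * log (PA x / ((t * PA x + (s - t) * PN x) / s))
      + (s - t) * PN x * log (PN x / ((t * PA x + (s - t) * PN x) / s))) := by
  simp only [fMT, KL, pmix, sub_zero, mul_sum, ← sum_add_distrib, mul_assoc]

variable {PN PA : X → ℝ} {t m T : ℝ}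

theorem sum_pmix (hN : ∑ x, PN x = 1) (hA : ∑ x, PA x = 1) (hmT : m ≠ T) :
    ∑ x, pmix PN PA t m T x = 1 := by
  simp only [pmix, ← sum_div, sum_add_distrib, ← mul_sum, hN, hA]
  field_simp [sub_ne_zero.mpr hmT]
  ring

theorem pmix_pos (hNpos : ∀ x, 0 < PN x) (hApos : ∀ x, 0 < PA x) (ht : 0 < t)
    (hdom : T + t < m) (x : X) : 0 < pmix PN PA t m T x :=
  div_pos (add_pos (mul_pos ht (hApos x)) (mul_pos (by linarith) (hNpos x))) (by linarith)

theorem ne_pmix (hne : PN ≠ PA) (ht : t ≠ 0) (hmT : m ≠ T) : PN ≠ pmix PN PA t m T := by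
  refine fun h => hne (funext fun x => ?_)
  have hx := congrFun h x
  rw [pmix, eq_div_iff (sub_ne_zero.mpr hmT)] at hx
  exact mul_left_cancel₀ ht (by linarith)

theorem hasDerivAt_fMT_zero (hN : IsProb PN) (hA : IsProb PA)
    (hNpos : ∀ x, 0 < PN x) (hApos : ∀ x, 0 < PA x) (ht : 0 < t) {s : ℝ} (hs : t < s) :
    HasDerivAt (fun s => fMT PN PA t s 0) (KL PN (pmix PN PA t s 0)) s := by
  have hs0 : s ≠ 0 := (ht.trans hs).ne'
  have hterm : ∀ x ∈ univ, HasDerivAt _ _ s := fun x _ =>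
    hasDerivAt_mixture_term (hApos x).ne' (hNpos x).ne' hs0
      (add_pos (mul_pos ht (hApos x)) (mul_pos (sub_pos.2 hs) (hNpos x))).ne'
  have hsum := sum_pmix (t := t) hN.2 hA.2 hs0
  simp only [pmix, sub_zero] at hsum
  simp only [funext (fMT_zero_eq_sum PN PA t)]
  refine (HasDerivAt.fun_sum hterm).congr_deriv ?_
  simp only [sum_sub_distrib, sum_add_distrib, hsum, hN.2, KL, pmix, sub_zero]
  ring

theorem strictMonoOn_fMT_zero (hN : IsProb PN) (hA : IsProb PA) (hne : PN ≠ PA)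
    (hNpos : ∀ x, 0 < PN x) (hApos : ∀ x, 0 < PA x) (ht : 0 < t) :
    StrictMonoOn (fun s => fMT PN PA t s 0) (Set.Ioi t) := by
  have hderiv (s : ℝ) (hs : s ∈ Set.Ioi t) := hasDerivAt_fMT_zero hN hA hNpos hApos ht hs
  refine strictMonoOn_of_deriv_pos (convex_Ioi t)
    (fun s hs => (hderiv s hs).continuousAt.continuousWithinAt) fun s hs => ?_
  rw [interior_Ioi] at hs
  have hs0 : s ≠ 0 := (ht.trans hs).ne'
  rw [(hderiv s hs).deriv]
  exact KL_pos_of_ne hN.1 (pmix_pos hNpos hApos ht (by simpa using hs)) hN.2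
    (sum_pmix hN.2 hA.2 hs0) (ne_pmix hne ht.ne' hs0)

end

theorem stmt15_general {X : Type*} [Fintype X] (PN PA : X → ℝ)
    (hN : IsProb PN) (hA : IsProb PA) (hne : PN ≠ PA)
    (hNpos : ∀ x, 0 < PN x) (hApos : ∀ x, 0 < PA x)
    (t M T : ℝ) (ht : 1 ≤ t) (hdom : T + t < M) :
    HasDerivAt (fun m : ℝ => fMT PN PA t m T) (KL PN (pmix PN PA t M T)) M
    ∧ HasDerivAt (fun T' : ℝ => fMT PN PA t M T') (-(KL PN (pmix PN PA t M T))) T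
    ∧ (∀ M₁ M₂ : ℝ, T + t < M₁ → M₁ < M₂ → fMT PN PA t M₁ T < fMT PN PA t M₂ T)
    ∧ (∀ T₁ T₂ : ℝ, t ≤ T₁ → T₁ < T₂ → T₂ + t < M →
        fMT PN PA t M T₂ < fMT PN PA t M T₁) := by
  have ht0 : 0 < t := one_pos.trans_le ht
  have hg := hasDerivAt_fMT_zero hN hA hNpos hApos ht0 (s := M - T) (by linarith)
  have hmono := strictMonoOn_fMT_zero hN hA hne hNpos hApos ht0
  refine ⟨?_, ?_, fun M₁ M₂ h₁ h₂ => ?_, fun T₁ T₂ _ h₂ h₃ => ?_⟩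
  · simpa [Function.comp_def, fMT_sub, pmix_sub] using hg.comp M ((hasDerivAt_id M).sub_const T)
  · simpa [Function.comp_def, fMT_sub, pmix_sub] using hg.comp T ((hasDerivAt_id T).const_sub M)
  · rw [← fMT_sub, ← fMT_sub PN PA t M₂]
    exact hmono (Set.mem_Ioi.2 (by linarith)) (Set.mem_Ioi.2 (by linarith)) (by linarith)
  · rw [← fMT_sub, ← fMT_sub PN PA t M T₁]
    exact hmono (Set.mem_Ioi.2 (by linarith)) (Set.mem_Ioi.2 (by linarith)) (by linarith)

/-- ∂f/∂M = D(P_N‖P_mix^t), ∂f/∂T = -D(P_N‖P_mix^t); in particular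
f is strictly increasing in M and strictly decreasing in T. -/
theorem stmt15 {X : Type*} [Fintype X] (PN PA : X → ℝ)
    (hN : IsProb PN) (hA : IsProb PA) (hne : PN ≠ PA)
    (hNpos : ∀ x, 0 < PN x) (hApos : ∀ x, 0 < PA x)
    (t M T : ℝ) (ht : 1 ≤ t) (htT : t ≤ T) (hdom : T + t < M) :
    HasDerivAt (fun m : ℝ => fMT PN PA t m T) (KL PN (pmix PN PA t M T)) M
    ∧ HasDerivAt (fun T' : ℝ => fMT PN PA t M T') (-(KL PN (pmix PN PA t M T))) T
    ∧ (∀ M₁ M₂ : ℝ, T + t < M₁ → M₁ < M₂ → fMT PN PA t M₁ T < fMT PN PA t M₂ T)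
    ∧ (∀ T₁ T₂ : ℝ, t ≤ T₁ → T₁ < T₂ → T₂ + t < M →
        fMT PN PA t M T₂ < fMT PN PA t M T₁) :=
  stmt15_general PN PA hN hA hne hNpos hApos t M T ht hdom
end
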